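/- arXiv:2006.11516 — 7 statements merged into one kernel-verified Lean document; each statement's English description precedes it below -/
import Mathlib

section
/- If two binary strings x, x' of length L satisfy B_{1,s}(x) ∩ B_{1,s}(x') ≠ ∅, then there exist indices i_del, i'_del ∈ [L] and a set {λ_1 < λ_2 < ⋯ < λ_{2s}} ⊆ [L] \ {i_del} such that the string x' with coordinate i'_del removed can be obtained from the string x with coordinate i_del removed by substituting at most 2s symbols, all of whose positions (in x) lie in {λ_1, …, λ_{2s}}. -/
/-- `B_{1,s}(x)`: all strings of length `L - 1` obtained from `x` by one deletion
and at most `s` substitutions. -/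
def ball (s : ℕ) {L : ℕ} (x : Fin L → Bool) : Set (Fin (L - 1) → Bool) :=
  {y | ∃ f : Fin (L - 1) → Fin L, StrictMono f ∧ hammingDist y (x ∘ f) ≤ s}

/-!
A common element `y` of the two balls is `x` with position `i_del` deleted, up to `s`
substitutions, and likewise `x'` with position `i'_del` deleted; deletion patterns are exactly
the maps `Fin.succAbove`. By the triangle inequality the two deleted strings differ in at most
`2 s` positions, and those positions, viewed in `x`, avoid `i_del`; since `2 s < L` they can be
padded to exactly `2 s` positions still avoiding `i_del`.
-/

open Finset

lemma Fin.exists_eq_succAbove_of_strictMono {n : ℕ} {f : Fin n → Fin (n + 1)}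
    (hf : StrictMono f) : ∃ p : Fin (n + 1), f = p.succAbove := by
  obtain ⟨p, hp⟩ : ∃ p, (univ.image f)ᶜ = {p} := by
    rw [← card_eq_one, card_compl, card_image_of_injective _ hf.injective]
    simp
  refine ⟨p, (hf.range_inj (Fin.strictMono_succAbove p)).1 ?_⟩
  ext a
  have := congrArg (a ∈ ·) hp
  simp only [mem_compl, mem_image, mem_univ, true_and, mem_singleton, eq_iff_iff] at this
  rw [Fin.range_succAbove, Set.mem_compl_singleton_iff, Set.mem_range, ← not_iff_not, not_not,
    this]

lemma exists_hammingDist_succAbove_le_of_ball_inter {s n : ℕ} {x x' : Fin (n + 1) → Bool}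
    (h : (ball s x ∩ ball s x').Nonempty) :
    ∃ p p' : Fin (n + 1), hammingDist (x ∘ p.succAbove) (x' ∘ p'.succAbove) ≤ 2 * s := by
  obtain ⟨y, ⟨f, hf, hy⟩, ⟨f', hf', hy'⟩⟩ := h
  obtain ⟨p, rfl⟩ := Fin.exists_eq_succAbove_of_strictMono hf
  obtain ⟨p', rfl⟩ := Fin.exists_eq_succAbove_of_strictMono hf'
  refine ⟨p, p', ?_⟩
  calc hammingDist (x ∘ p.succAbove) (x' ∘ p'.succAbove)
      ≤ hammingDist y (x ∘ p.succAbove) + hammingDist y (x' ∘ p'.succAbove) :=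
        hammingDist_comm y _ ▸ hammingDist_triangle _ _ _
    _ ≤ 2 * s := by omega

lemma Finset.exists_superset_card_eq_notMem {α : Type*} [Fintype α] [DecidableEq α]
    {a : α} {M : Finset α} {k : ℕ} (ha : a ∉ M) (hM : #M ≤ k) (hk : k < Fintype.card α) :
    ∃ Λ : Finset α, M ⊆ Λ ∧ #Λ = k ∧ a ∉ Λ := by
  obtain ⟨Λ, hMΛ, hΛ, hcard⟩ := exists_subsuperset_card_eq (subset_compl_singleton.2 ha) hM
    (by rw [card_compl, card_singleton]; omega)
  exact ⟨Λ, hMΛ, hcard, fun h => by simpa using hΛ h⟩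

theorem stmt1_general (s n : ℕ) (hL : 2 * s + 1 ≤ n)
    (x x' : Fin (n + 1) → Bool)
    (hInt : (ball s x ∩ ball s x').Nonempty) :
    ∃ (idel i'del : Fin (n + 1)) (Λ : Finset (Fin (n + 1))),
      Λ.card = 2 * s ∧ idel ∉ Λ ∧
      ∀ i : Fin n, x (idel.succAbove i) ≠ x' (i'del.succAbove i) →
        idel.succAbove i ∈ Λ := by
  obtain ⟨idel, i'del, hdist⟩ := exists_hammingDist_succAbove_le_of_ball_inter hInt
  let M : Finset (Fin n) := {i | x (idel.succAbove i) ≠ x' (i'del.succAbove i)}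
  have hM : #(M.map idel.succAboveEmb) ≤ 2 * s := by rw [card_map]; exact hdist
  obtain ⟨Λ, hMΛ, hcard, hidel⟩ := exists_superset_card_eq_notMem (a := idel)
    (by simp) hM (by rw [Fintype.card_fin]; omega)
  exact ⟨idel, i'del, Λ, hcard, hidel, fun i hi => hMΛ (mem_map_of_mem _ (by simp [M, hi]))⟩

theorem stmt1 (s n : ℕ) (hs : 0 < s) (hL : 2 * s + 1 ≤ n)
    (x x' : Fin (n + 1) → Bool)
    (hInt : (ball s x ∩ ball s x').Nonempty) :
    ∃ (idel i'del : Fin (n + 1)) (Λ : Finset (Fin (n + 1))),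
      Λ.card = 2 * s ∧ idel ∉ Λ ∧
      ∀ i : Fin n, x (idel.succAbove i) ≠ x' (i'del.succAbove i) →
        idel.succAbove i ∈ Λ :=
  stmt1_general s n hL x x' hInt
end

section
/- Let x, x' ∈ {0,1}^L and define u_i = Σ_{ℓ=i}^L x_ℓ − Σ_{ℓ=i}^L x'_ℓ. If α ≤ β are in [L] and x_i = x'_{i−1} for all i ∈ [α+1, β−1], then either u_i ≥ 0 for all i ∈ [α, β], or u_i ≤ 0 for all i ∈ [α, β]. -/
/-- The bit of a binary string, as an integer. -/
def bit (x : ℕ → Bool) (i : ℕ) : ℤ := if x i then 1 else 0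

/-- `u_i = Σ_{ℓ=i}^L x_ℓ − Σ_{ℓ=i}^L x'_ℓ` (suffix-sum difference). -/
def u (L : ℕ) (x x' : ℕ → Bool) (i : ℕ) : ℤ :=
  (∑ ℓ ∈ Finset.Icc i L, bit x ℓ) - ∑ ℓ ∈ Finset.Icc i L, bit x' ℓ

lemma bit_nonneg (x : ℕ → Bool) (i : ℕ) : 0 ≤ bit x i := by
  unfold bit; split <;> norm_num

lemma bit_le_one (x : ℕ → Bool) (i : ℕ) : bit x i ≤ 1 := by
  unfold bit; split <;> norm_num

lemma ustep (L : ℕ) (x x' : ℕ → Bool) (i : ℕ) (hi : i ≤ L) :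
    u L x x' i = bit x i - bit x' i + u L x x' (i + 1) := by
  unfold u
  rw [← Finset.Ioc_insert_left hi, ← Finset.Icc_add_one_left_eq_Ioc,
    Finset.sum_insert (by simp), Finset.sum_insert (by simp)]
  ring

theorem stmt5 (L α β : ℕ) (x x' : ℕ → Bool)
    (hα : 1 ≤ α) (hβ : β ≤ L) (hαβ : α ≤ β)
    (h : ∀ i ∈ Finset.Icc (α + 1) (β - 1), x i = x' (i - 1)) :
    (∀ i ∈ Finset.Icc α β, 0 ≤ u L x x' i) ∨
      (∀ i ∈ Finset.Icc α β, u L x x' i ≤ 0) := by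
  set c : ℤ := u L x x' β - bit x' (β - 1) with hc
  have key : ∀ n i, α + 1 ≤ i → i ≤ β → β - i = n →
      u L x x' i - bit x' (i - 1) = c := by
    intro n
    induction n with
    | zero =>
        intro i h1 h2 hn
        have : i = β := by omega
        subst this; rfl
    | succ n ih =>
        intro i h1 h2 hn
        have hib : i < β := by omega
        have hx : x i = x' (i - 1) := h i (Finset.mem_Icc.mpr ⟨h1, by omega⟩)
        have hbx : bit x i = bit x' (i - 1) := by unfold bit; rw [hx]
        have hst := ustep L x x' i (by omega)
        have hrec := ih (i + 1) (by omega) (by omega) (by omega)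
        have heq : u L x x' i - bit x' (i - 1) = u L x x' (i + 1) - bit x' i := by
          rw [hst, hbx]; ring_nf
        rw [heq]
        simpa using hrec
  have bounds : ∀ i ∈ Finset.Icc α β, c ≤ u L x x' i ∧ u L x x' i ≤ c + 1 := by
    intro i hi
    rw [Finset.mem_Icc] at hi
    rcases eq_or_lt_of_le hi.1 with hiα | hiα
    · rcases eq_or_lt_of_le hi.2 with hiβ | hiβ
      · -- i = α = β
        subst hiβ
        have h0 := bit_nonneg x' (i - 1)
        have h1 := bit_le_one x' (i - 1)
        constructor <;> simp only [hc] <;> omega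
      · -- i = α < β
        have hstep := ustep L x x' i (by omega)
        have hrec := key (β - (i+1)) (i + 1) (by omega) (by omega) rfl
        have hs : (i + 1) - 1 = i := by omega
        rw [hs] at hrec
        have h0 := bit_nonneg x i
        have h1 := bit_le_one x i
        have : u L x x' i = c + bit x i := by rw [hstep]; omega
        omega
    · have hrec := key (β - i) i (by omega) hi.2 rfl
      have h0 := bit_nonneg x' (i - 1)
      have h1 := bit_le_one x' (i - 1)
      constructor <;> omega
  rcases le_or_gt 0 c with hc0 | hc0
  · left; intro i hi; have := (bounds i hi).1; omega
  · right; intro i hi; have := (bounds i hi).2; omega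
end

section
/- Let T_1, …, T_q be nonempty finite sets of positive integers such that every element of T_e is strictly less than every element of T_{e'} whenever e < e'. Let w : ℕ → ℕ be a weight function (nonnegative integers) such that for each e ∈ [q] there exists i ∈ T_e with w(i) > 0. Then the q×q matrix B with entries B_{j,e} = Σ_{i ∈ T_e} w(i) · i^{j−1} (j, e ∈ [q]) has strictly positive determinant. -/
theorem stmt10 (q : ℕ) (hq : 0 < q) (T : Fin q → Finset ℕ)
    (hne : ∀ e, (T e).Nonempty)
    (hpos : ∀ e, ∀ i ∈ T e, 0 < i)
    (horder : ∀ e e' : Fin q, e < e' → ∀ i ∈ T e, ∀ i' ∈ T e', i < i')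
    (w : ℕ → ℕ)
    (hw : ∀ e, ∃ i ∈ T e, 0 < w i) :
    0 < Matrix.det
      (Matrix.of fun j e : Fin q => ∑ i ∈ T e, (w i : ℤ) * (i : ℤ) ^ (j : ℕ)) := by
  rw [← Matrix.det_transpose]
  have key := MultilinearMap.map_sum_finset
    (f := (Matrix.detRowAlternating (R := ℤ) (n := Fin q)).toMultilinearMap)
    (g := fun (e : Fin q) (i : ℕ) => (fun j : Fin q => (w i : ℤ) * (i : ℤ) ^ (j : ℕ)))
    (A := T)
  have hM : (Matrix.transpose
        (Matrix.of fun j e : Fin q => ∑ i ∈ T e, (w i : ℤ) * (i : ℤ) ^ (j : ℕ)))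
      = Matrix.of (fun e : Fin q => ∑ i ∈ T e, (fun j : Fin q => (w i : ℤ) * (i : ℤ) ^ (j : ℕ))) := by
    ext e j
    simp [Finset.sum_apply]
  rw [hM]
  have hdet : Matrix.det
      (Matrix.of (fun e : Fin q => ∑ i ∈ T e, (fun j : Fin q => (w i : ℤ) * (i : ℤ) ^ (j : ℕ))))
      = ∑ r ∈ Fintype.piFinset T,
          (∏ e, (w (r e) : ℤ)) * (Matrix.vandermonde fun e => ((r e : ℕ) : ℤ)).det := by
    refine key.trans ?_
    refine Finset.sum_congr rfl fun r _ => ?_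
    have : (Matrix.detRowAlternating (R := ℤ) (n := Fin q)).toMultilinearMap
          (fun e => fun j : Fin q => (w (r e) : ℤ) * ((r e : ℕ) : ℤ) ^ (j : ℕ))
        = Matrix.det (Matrix.of fun e j : Fin q =>
            (w (r e) : ℤ) * (Matrix.vandermonde fun e' => ((r e' : ℕ) : ℤ)) e j) := rfl
    rw [this, Matrix.det_mul_column]
  rw [hdet]
  have hvpos : ∀ r ∈ Fintype.piFinset T,
      0 < (Matrix.vandermonde fun e => ((r e : ℕ) : ℤ)).det := by
    intro r hr
    rw [Matrix.det_vandermonde]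
    apply Finset.prod_pos
    intro i _
    apply Finset.prod_pos
    intro j hj
    have hij : i < j := Finset.mem_Ioi.mp hj
    have h := horder i j hij (r i) (Fintype.mem_piFinset.mp hr i) (r j)
      (Fintype.mem_piFinset.mp hr j)
    have h2 : ((r i : ℕ) : ℤ) < ((r j : ℕ) : ℤ) := by exact_mod_cast h
    exact sub_pos.mpr h2
  apply Finset.sum_pos'
  · intro r hr
    exact mul_nonneg (Finset.prod_nonneg fun e _ => by positivity) (le_of_lt (hvpos r hr))
  · choose f hfT hfw using hw
    refine ⟨f, Fintype.mem_piFinset.mpr hfT, ?_⟩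
    apply mul_pos
    · apply Finset.prod_pos; intro e _; exact_mod_cast hfw e
    · exact hvpos f (Fintype.mem_piFinset.mpr hfT)
end

section
/- Let T_1, …, T_q be finite sets of positive integers with every element of T_e strictly less than every element of T_{e'} for e < e', let w : ℕ → ℕ be a weight function, and let v ∈ {−1, 1}^q. If Σ_{e=1}^q (Σ_{i ∈ T_e} w(i) i^{j−1}) v_e = 0 for every j ∈ [q], then Σ_{i ∈ T_e} w(i) i^{j−1} = 0 for all e and j; in particular w(i) = 0 for all i ∈ ∪_e T_e. -/
theorem stmt11 (q : ℕ) (T : Fin q → Finset ℕ)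
    (hpos : ∀ e, ∀ i ∈ T e, 0 < i)
    (horder : ∀ e e' : Fin q, e < e' → ∀ i ∈ T e, ∀ i' ∈ T e', i < i')
    (w : ℕ → ℕ) (v : Fin q → ℤ)
    (hv : ∀ e, v e = 1 ∨ v e = -1)
    (hker : ∀ j : Fin q,
      ∑ e : Fin q, (∑ i ∈ T e, (w i : ℤ) * (i : ℤ) ^ (j : ℕ)) * v e = 0) :
    (∀ e j : Fin q, ∑ i ∈ T e, (w i : ℤ) * (i : ℤ) ^ (j : ℕ) = 0) ∧
      ∀ e : Fin q, ∀ i ∈ T e, w i = 0 := by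
  classical
  rcases Nat.eq_zero_or_pos q with hq | hq
  · subst hq
    exact ⟨fun e => e.elim0, fun e => e.elim0⟩
  suffices hw : ∀ e : Fin q, ∀ i ∈ T e, w i = 0 by
    refine ⟨fun e j => Finset.sum_eq_zero fun i hi => by rw [hw e i hi]; simp, hw⟩
  set v' : ℕ → ℤ := fun n => v ⟨min n (q-1), by omega⟩ with hv'def
  have hv'fin : ∀ e : Fin q, v' (e : ℕ) = v e := by
    intro e
    have he : (⟨min (e:ℕ) (q-1), by omega⟩ : Fin q) = e := by
      apply Fin.ext; simp; omega
    simp only [hv'def]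
    rw [he]
  have hv' : ∀ n, v' n = 1 ∨ v' n = -1 := fun n => hv _
  set U : ℕ → Finset ℕ := fun n => Finset.univ.biUnion (fun e : Fin q => if (e:ℕ) ≤ n then T e else ∅) with hUdef
  set b : ℕ → ℕ := fun n => (U n).sup id with hbdef
  have hb_le : ∀ (e : Fin q) (n : ℕ), (e:ℕ) ≤ n → ∀ i ∈ T e, i ≤ b n := by
    intro e n hen i hi
    refine Finset.le_sup (f := id) ?_
    refine Finset.mem_biUnion.mpr ⟨e, Finset.mem_univ _, ?_⟩
    simp [hUdef, hen, hi]
  have hb_lt : ∀ (e : Fin q) (n : ℕ), n < (e:ℕ) → ∀ i ∈ T e, b n < i := by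
    intro e n hne i hi
    refine (Finset.sup_lt_iff (show ⊥ < i from hpos e i hi)).mpr ?_
    intro j hj
    rcases Finset.mem_biUnion.mp hj with ⟨e', _, hj'⟩
    by_cases h : (e':ℕ) ≤ n
    · rw [if_pos h] at hj'
      exact horder e' e (Fin.lt_def.mpr (by omega)) j hj' i hi
    · rw [if_neg h] at hj'; exact absurd hj' (Finset.notMem_empty _)
  set F : Finset ℕ := (Finset.range (q-1)).filter (fun n => v' n ≠ v' (n+1)) with hFdef
  have hFlt : ∀ m ∈ F, m < q - 1 := fun m hm => Finset.mem_range.mp (Finset.mem_filter.mp hm).1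
  set P : Polynomial ℤ := ∏ m ∈ F, (Polynomial.C 2 * Polynomial.X - Polynomial.C (2*(b m:ℤ)+1)) with hPdef
  have hdeg : P.natDegree < q := by
    have h1 : P.natDegree ≤ ∑ m ∈ F, (Polynomial.C 2 * Polynomial.X - Polynomial.C (2*(b m:ℤ)+1)).natDegree :=
      Polynomial.natDegree_prod_le _ _
    have h2 : ∀ m ∈ F, (Polynomial.C 2 * Polynomial.X - Polynomial.C (2*(b m:ℤ)+1)).natDegree ≤ 1 := by
      intro m _
      refine le_trans (Polynomial.natDegree_sub_le _ _) ?_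
      rw [Polynomial.natDegree_C_mul_X _ (by norm_num), Polynomial.natDegree_C]
      simp
    have h3 : F.card ≤ q - 1 := le_trans (Finset.card_filter_le _ _) (by simp)
    calc P.natDegree ≤ ∑ m ∈ F, 1 := le_trans h1 (Finset.sum_le_sum h2)
      _ = F.card := by simp
      _ < q := by omega
  have hPeval : ∀ i : ℕ, P.eval (i:ℤ) = ∏ m ∈ F, (2*(i:ℤ) - (2*(b m:ℤ)+1)) := by
    intro i; simp [hPdef, Polynomial.eval_prod]
  have key : ∀ (e : Fin q), ∀ i ∈ T e, ∀ n, (e:ℕ) ≤ n → n ≤ q - 1 →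
      0 < v e * v' n * ∏ m ∈ F.filter (· < n), (2*(i:ℤ) - (2*(b m:ℤ)+1)) := by
    intro e i hi n hen
    have hfacpos : ∀ m, b m < i → 0 < 2*(i:ℤ) - (2*(b m:ℤ)+1) := by
      intro m hm
      have : (b m : ℤ) < i := by exact_mod_cast hm
      linarith
    have hfacneg : ∀ m, i ≤ b m → 2*(i:ℤ) - (2*(b m:ℤ)+1) < 0 := by
      intro m hm
      have : (i:ℤ) ≤ b m := by exact_mod_cast hm
      linarith
    induction n, hen using Nat.le_induction with
    | base =>
      intro _
      have hprod : 0 < ∏ m ∈ F.filter (· < (e:ℕ)), (2*(i:ℤ) - (2*(b m:ℤ)+1)) := by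
        refine Finset.prod_pos ?_
        intro m hm
        exact hfacpos m (hb_lt e m (Finset.mem_filter.mp hm).2 i hi)
      rw [hv'fin e]
      rcases hv e with h | h <;> rw [h] <;> nlinarith [hprod]
    | succ n hn ih =>
      intro hn1
      have IH := ih (by omega)
      by_cases hF : n ∈ F
      · have hset : F.filter (· < n+1) = insert n (F.filter (· < n)) := by
          ext m
          simp only [Finset.mem_filter, Finset.mem_insert]
          constructor
          · rintro ⟨h1, h2⟩
            rcases Nat.lt_succ_iff_lt_or_eq.mp h2 with h | h
            · exact Or.inr ⟨h1, h⟩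
            · exact Or.inl h
          · rintro (rfl | ⟨h1, h2⟩)
            · exact ⟨hF, Nat.lt_succ_self _⟩
            · exact ⟨h1, Nat.lt_succ_of_lt h2⟩
        have hvstep : v' (n+1) = - v' n := by
          have hne : v' n ≠ v' (n+1) := by
            have := (Finset.mem_filter.mp hF).2
            simpa using this
          rcases hv' n with h1 | h1 <;> rcases hv' (n+1) with h2 | h2 <;>
            rw [h1, h2] at hne ⊢ <;> omega
        have hfneg : 2*(i:ℤ) - (2*(b n:ℤ)+1) < 0 := hfacneg n (hb_le e n hn i hi)
        rw [hset, Finset.prod_insert (by simp), hvstep]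
        have heq : v e * -v' n * ((2*(i:ℤ) - (2*(b n:ℤ)+1)) * ∏ m ∈ F.filter (· < n), (2*(i:ℤ) - (2*(b m:ℤ)+1)))
            = (-(2*(i:ℤ) - (2*(b n:ℤ)+1))) * (v e * v' n * ∏ m ∈ F.filter (· < n), (2*(i:ℤ) - (2*(b m:ℤ)+1))) := by
          ring
        rw [heq]
        exact mul_pos (by linarith) IH
      · have hset : F.filter (· < n+1) = F.filter (· < n) := by
          ext m
          simp only [Finset.mem_filter]
          constructor
          · rintro ⟨h1, h2⟩
            refine ⟨h1, ?_⟩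
            rcases Nat.lt_succ_iff_lt_or_eq.mp h2 with h | h
            · exact h
            · exact absurd (h ▸ h1) hF
          · rintro ⟨h1, h2⟩; exact ⟨h1, Nat.lt_succ_of_lt h2⟩
        have hvstep : v' (n+1) = v' n := by
          by_contra hne
          exact hF (Finset.mem_filter.mpr ⟨Finset.mem_range.mpr (by omega), fun h => hne h.symm⟩)
        rw [hset, hvstep]
        exact IH
  have hker' : ∀ j, j < q → ∑ e : Fin q, (∑ i ∈ T e, (w i:ℤ) * (i:ℤ)^j) * v e = 0 := by
    intro j hj
    exact hker ⟨j, hj⟩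
  have hsum : ∑ e : Fin q, v e * ∑ i ∈ T e, (w i:ℤ) * P.eval (i:ℤ) = 0 := by
    have heval : ∀ i : ℕ, P.eval (i:ℤ) = ∑ j ∈ Finset.range q, P.coeff j * (i:ℤ)^j :=
      fun i => Polynomial.eval_eq_sum_range' hdeg _
    have step : ∑ e : Fin q, v e * ∑ i ∈ T e, (w i:ℤ) * P.eval (i:ℤ)
        = ∑ j ∈ Finset.range q, P.coeff j * ∑ e : Fin q, (∑ i ∈ T e, (w i:ℤ) * (i:ℤ)^j) * v e := by
      simp_rw [heval, Finset.mul_sum, Finset.sum_mul]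
      calc ∑ e : Fin q, ∑ i ∈ T e, ∑ j ∈ Finset.range q, v e * ((w i:ℤ) * (P.coeff j * (i:ℤ)^j))
          = ∑ e : Fin q, ∑ j ∈ Finset.range q, ∑ i ∈ T e, v e * ((w i:ℤ) * (P.coeff j * (i:ℤ)^j)) :=
            Finset.sum_congr rfl fun e _ => Finset.sum_comm
        _ = ∑ j ∈ Finset.range q, ∑ e : Fin q, ∑ i ∈ T e, v e * ((w i:ℤ) * (P.coeff j * (i:ℤ)^j)) := Finset.sum_comm
        _ = ∑ j ∈ Finset.range q, ∑ e : Fin q, P.coeff j * ∑ i ∈ T e, (w i:ℤ) * (i:ℤ)^j * v e := by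
            refine Finset.sum_congr rfl fun j _ => Finset.sum_congr rfl fun e _ => ?_
            rw [Finset.mul_sum]
            refine Finset.sum_congr rfl fun i _ => ?_
            ring
    rw [step]
    apply Finset.sum_eq_zero
    intro j hj
    rw [hker' j (Finset.mem_range.mp hj), mul_zero]
  have hpos' : ∀ (e : Fin q), ∀ i ∈ T e, 0 < v e * v' (q-1) * P.eval (i:ℤ) := by
    intro e i hi
    have h := key e i hi (q-1) (by omega) le_rfl
    have hfe : F.filter (· < q - 1) = F := Finset.filter_true_of_mem hFlt
    rw [hfe] at h
    rw [hPeval i]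
    exact h
  have h0 : ∑ e : Fin q, ∑ i ∈ T e, (w i:ℤ) * (v e * v' (q-1) * P.eval (i:ℤ)) = 0 := by
    have hrw : ∑ e : Fin q, ∑ i ∈ T e, (w i:ℤ) * (v e * v' (q-1) * P.eval (i:ℤ))
        = v' (q-1) * ∑ e : Fin q, v e * ∑ i ∈ T e, (w i:ℤ) * P.eval (i:ℤ) := by
      rw [Finset.mul_sum]
      refine Finset.sum_congr rfl fun e _ => ?_
      rw [Finset.mul_sum, Finset.mul_sum]
      refine Finset.sum_congr rfl fun i _ => ?_
      ring
    rw [hrw, hsum, mul_zero]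
  intro e i hi
  have hnonneg : ∀ e : Fin q, ∀ i ∈ T e, 0 ≤ (w i:ℤ) * (v e * v' (q-1) * P.eval (i:ℤ)) :=
    fun e i hi => mul_nonneg (Int.natCast_nonneg _) (le_of_lt (hpos' e i hi))
  have houter := (Finset.sum_eq_zero_iff_of_nonneg
    (fun e _ => Finset.sum_nonneg (fun i hi => hnonneg e i hi))).mp h0 e (Finset.mem_univ e)
  have hterm := (Finset.sum_eq_zero_iff_of_nonneg (fun i hi => hnonneg e i hi)).mp houter i hi
  have hp := hpos' e i hi
  have hwz : (w i:ℤ) = 0 := by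
    rcases mul_eq_zero.mp hterm with h | h
    · exact h
    · exact absurd h (ne_of_gt hp)
  exact_mod_cast hwz
end

section
/- Fix s ≥ 1 and L > 2s+1. Define f : {0,1}^L → Π_{j=1}^{2s+1} [0, (2s+1)L^j − 1] by f(x)_j = (x · a^{(j)}) mod (2s+1)L^j, where a^{(j)}_i = Σ_{ℓ=1}^i ℓ^{j−1}. Then for any x, x' ∈ {0,1}^L, if B_{1,s}(x) ∩ B_{1,s}(x') ≠ ∅ and f(x) = f(x'), then x = x'. -/
/-- `a^{(j)}_i = Σ_{ℓ=1}^i ℓ^{j-1}` (natural-number version). -/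
def avec (j i : ℕ) : ℕ := ∑ ℓ ∈ Finset.Icc 1 i, ℓ ^ (j - 1)

/-- The inner product `x · a^{(j)}` for a string `x` of length `L`,
where position `i : Fin L` is the 1-based position `i + 1`. -/
def dotA {L : ℕ} (j : ℕ) (x : Fin L → Bool) : ℕ :=
  ∑ i : Fin L, (if x i then 1 else 0) * avec j (i.val + 1)

open Finset Polynomial

theorem Fin.exists_succAbove_eq_of_strictMono {n : ℕ} {f : Fin n → Fin (n + 1)}
    (hf : StrictMono f) : ∃ p : Fin (n + 1), p.succAbove = f := by
  obtain ⟨p, hp⟩ : ∃ p, p ∉ Set.range f := by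
    by_contra! h
    simpa using Fintype.card_le_of_surjective f h
  refine ⟨p, ((Fin.strictMono_succAbove p).range_inj hf).1 ?_⟩
  have hsub : Set.range f ⊆ Set.range p.succAbove := by
    rw [Fin.range_succAbove]
    rintro _ ⟨i, rfl⟩ hi
    exact hp ⟨i, hi⟩
  refine (Set.eq_of_subset_of_ncard_le hsub ?_).symm
  rw [Set.ncard_range_of_injective hf.injective,
    Set.ncard_range_of_injective Fin.succAbove_right_injective]

theorem Fin.val_succAbove {n : ℕ} (p : Fin (n + 1)) (i : Fin n) :
    (p.succAbove i : ℕ) = if (i : ℕ) < p then (i : ℕ) else i + 1 := by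
  unfold Fin.succAbove
  split_ifs <;> simp_all [Fin.lt_def]

theorem hammingDist_comp_succAbove {n : ℕ} {β : Type*} [DecidableEq β] {a b : Fin (n + 1) → β}
    {q : Fin (n + 1)} (h : a q = b q) :
    hammingDist (a ∘ q.succAbove) (b ∘ q.succAbove) = hammingDist a b := by
  simp [hammingDist, card_filter, Fin.sum_univ_succAbove _ q, h]

theorem Bool.toInt_mem_Icc (b : Bool) : b.toInt ∈ Set.Icc 0 1 := by
  cases b <;> simp

def tailSum {n : ℕ} (u : Fin n → ℤ) (k : ℕ) : ℤ := ∑ i : Fin n, if k ≤ (i : ℕ) then u i else 0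

section tailSum

variable {n : ℕ}

theorem tailSum_sub (u v : Fin n → ℤ) (k : ℕ) :
    tailSum (u - v) k = tailSum u k - tailSum v k := by
  simp only [tailSum, ← sum_sub_distrib, Pi.sub_apply]
  exact sum_congr rfl fun i _ => by split_ifs <;> simp

theorem tailSum_of_le (u : Fin n → ℤ) {k : ℕ} (hk : n ≤ k) : tailSum u k = 0 :=
  sum_eq_zero fun i _ => if_neg (by omega)

theorem tailSum_sub_tailSum_succ (u : Fin n → ℤ) (k : ℕ) :
    tailSum u k - tailSum u (k + 1) = if h : k < n then u ⟨k, h⟩ else 0 := by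
  simp only [tailSum, ← sum_sub_distrib]
  split_ifs with h
  · rw [sum_eq_single ⟨k, h⟩ (fun i _ hi => ?_) (by simp)]
    · simp
    · have : (i : ℕ) ≠ k := fun h' => hi (Fin.ext h')
      split_ifs <;> omega
  · exact sum_eq_zero fun i _ => by rw [if_neg (by omega), if_neg (by omega), sub_zero]

theorem tailSum_sub_tailSum_succ_val (u : Fin n → ℤ) (i : Fin n) :
    tailSum u i - tailSum u (i + 1) = u i := by
  simp [tailSum_sub_tailSum_succ]

theorem card_tailSum_ne_le (u : Fin n → ℤ) (N : ℕ) :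
    #{k ∈ range N | tailSum u k ≠ tailSum u (k + 1)} ≤ #{i | u i ≠ 0} := by
  refine (card_le_card fun k hk => ?_).trans (card_image_le (f := Fin.val))
  have hne := sub_ne_zero.2 (mem_filter.1 hk).2
  rw [tailSum_sub_tailSum_succ] at hne
  split_ifs at hne with h
  · exact mem_image.2 ⟨⟨k, h⟩, by simpa using hne, rfl⟩
  · exact absurd rfl hne

theorem tailSum_eq_of_succAbove (u : Fin (n + 1) → ℤ) (p : Fin (n + 1)) (k : ℕ) :
    tailSum u k = if k ≤ p then u p + tailSum (u ∘ p.succAbove) k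
      else tailSum (u ∘ p.succAbove) (k - 1) := by
  simp only [tailSum, Fin.sum_univ_succAbove _ p, Function.comp_apply, Fin.val_succAbove]
  split_ifs with h
  · congr 1
    exact sum_congr rfl fun i _ => by split_ifs <;> first | rfl | omega
  · rw [zero_add]
    exact sum_congr rfl fun i _ => by split_ifs <;> first | rfl | omega

theorem tailSum_sub_tailSum_succ_mem {u : Fin n → ℤ} (hu : ∀ i, u i ∈ Set.Icc 0 1) (k : ℕ) :
    tailSum u k - tailSum u (k + 1) ∈ Set.Icc 0 1 := by
  rw [tailSum_sub_tailSum_succ]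
  split_ifs
  exacts [hu _, ⟨le_rfl, zero_le_one⟩]

theorem tailSum_sub_tailSum_comp_succAbove_mem {u : Fin (n + 1) → ℤ}
    (hu : ∀ i, u i ∈ Set.Icc 0 1) (p : Fin (n + 1)) (k : ℕ) :
    tailSum u k - tailSum (u ∘ p.succAbove) k ∈ Set.Icc 0 1 := by
  rw [tailSum_eq_of_succAbove u p]
  split_ifs with h
  · simpa using hu p
  · obtain ⟨k, rfl⟩ : ∃ k', k = k' + 1 := ⟨k - 1, by omega⟩
    simpa only [Nat.add_sub_cancel] using
      tailSum_sub_tailSum_succ_mem (u := u ∘ p.succAbove) (fun i => hu _) k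

theorem tailSum_sub_tailSum_add_mem {u w : Fin (n + 1) → ℤ} {p q : Fin (n + 1)} (hpq : p ≤ q)
    (huw : u ∘ p.succAbove = w ∘ q.succAbove) (hu : ∀ i, u i ∈ Set.Icc 0 1)
    (hw : w q ∈ Set.Icc 0 1) (k : ℕ) :
    tailSum u k - tailSum w k + w q ∈ Set.Icc 0 1 := by
  rw [tailSum_eq_of_succAbove u p, tailSum_eq_of_succAbove w q, huw]
  have hpq : (p : ℕ) ≤ q := hpq
  split_ifs with hp hq hq
  · simpa using hu p
  · omega
  · obtain ⟨k, rfl⟩ : ∃ k', k = k' + 1 := ⟨k - 1, by omega⟩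
    have hz := tailSum_sub_tailSum_succ_mem (u := w ∘ q.succAbove)
      (fun i => by rw [← huw]; exact hu _) k
    simp only [Nat.add_sub_cancel]
    constructor <;> linarith [hz.1, hz.2]
  · simpa using hw

end tailSum

theorem avec_eq_sum_range (j m : ℕ) : avec j m = ∑ k ∈ range m, (k + 1) ^ (j - 1) := by
  rw [avec, ← Ico_add_one_right_eq_Icc, sum_Ico_eq_sum_range, Nat.add_sub_cancel]
  exact sum_congr rfl fun k _ => by rw [add_comm]

theorem avec_le_pow {j : ℕ} (hj : 1 ≤ j) (m : ℕ) : avec j m ≤ m ^ j := by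
  calc avec j m ≤ ∑ _k ∈ range m, m ^ (j - 1) := by
        rw [avec_eq_sum_range]
        exact sum_le_sum fun k hk => Nat.pow_le_pow_left (mem_range.1 hk) _
    _ = m ^ j := by
        rw [sum_const, card_range, smul_eq_mul, ← pow_succ', Nat.sub_add_cancel hj]

theorem avec_mono (j : ℕ) {a b : ℕ} (hab : a ≤ b) : avec j a ≤ avec j b := by
  simp only [avec_eq_sum_range]
  exact sum_le_sum_of_subset (range_subset_range.2 hab)

theorem sum_mul_avec_eq_sum_tailSum {n N : ℕ} (hN : n ≤ N) (u : Fin n → ℤ) (j : ℕ) :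
    ∑ i, u i * avec j (i + 1) = ∑ k ∈ range N, ((k : ℤ) + 1) ^ (j - 1) * tailSum u k := by
  have hrange (i : Fin n) : range ((i : ℕ) + 1) = {k ∈ range N | k ≤ (i : ℕ)} := by
    ext k; simp only [mem_range, mem_filter]; omega
  simp only [avec_eq_sum_range, hrange, tailSum, mul_sum, Nat.cast_sum, sum_filter]
  rw [sum_comm]
  push_cast
  exact sum_congr rfl fun k _ => sum_congr rfl fun i _ => by split_ifs <;> ring

theorem dotA_eq_sum {n : ℕ} (j : ℕ) (x : Fin n → Bool) :
    (dotA j x : ℤ) = ∑ i, (Bool.toInt ∘ x) i * avec j (i + 1) := by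
  simp only [dotA, Nat.cast_sum, Nat.cast_mul, Function.comp_apply]
  exact sum_congr rfl fun i _ => by cases x i <;> simp

theorem dotA_sub_dotA_comp_succAbove_mem {n : ℕ} (j : ℕ) (x : Fin (n + 1) → Bool)
    (p : Fin (n + 1)) :
    (dotA j x : ℤ) - dotA j (x ∘ p.succAbove) ∈ Set.Icc 0 (avec j (n + 1) : ℤ) := by
  have hbin (i) : (Bool.toInt ∘ x) i ∈ Set.Icc 0 1 := Bool.toInt_mem_Icc (x i)
  rw [dotA_eq_sum, dotA_eq_sum, sum_mul_avec_eq_sum_tailSum le_rfl,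
    sum_mul_avec_eq_sum_tailSum (Nat.le_succ n), ← Function.comp_assoc, ← sum_sub_distrib]
  simp only [← mul_sub]
  constructor
  · exact sum_nonneg fun k _ =>
      mul_nonneg (by positivity) (tailSum_sub_tailSum_comp_succAbove_mem hbin p k).1
  · rw [avec_eq_sum_range]
    push_cast
    exact sum_le_sum fun k _ => mul_le_of_le_one_right (by positivity)
      (tailSum_sub_tailSum_comp_succAbove_mem hbin p k).2

theorem abs_dotA_sub_dotA_le {n : ℕ} (j : ℕ) (z z' : Fin n → Bool) :
    |(dotA j z : ℤ) - dotA j z'| ≤ hammingDist z z' * avec j n := by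
  rw [dotA_eq_sum, dotA_eq_sum, ← sum_sub_distrib, hammingDist, card_filter, Nat.cast_sum,
    sum_mul]
  refine (abs_sum_le_sum_abs _ _).trans (sum_le_sum fun i _ => ?_)
  rw [← sub_mul, abs_mul, Nat.abs_cast]
  have hw : (avec j (i + 1) : ℤ) ≤ avec j n := by exact_mod_cast avec_mono j i.isLt
  by_cases h : z i = z' i
  · simp [h]
  · rw [if_pos h, Nat.cast_one, one_mul]
    refine mul_le_of_le_one_left (by positivity) ?_ |>.trans hw
    cases hz : z i <;> cases hz' : z' i <;> simp_all

theorem abs_dotA_sub_dotA_lt {n s j : ℕ} (hs : 1 ≤ s) (hj : 1 ≤ j) {x x' : Fin (n + 1) → Bool}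
    {p q : Fin (n + 1)} (hdist : hammingDist (x ∘ p.succAbove) (x' ∘ q.succAbove) ≤ 2 * s) :
    |(dotA j x : ℤ) - dotA j x'| < (2 * s + 1) * (n + 1) ^ j := by
  have hx := dotA_sub_dotA_comp_succAbove_mem j x p
  have hx' := dotA_sub_dotA_comp_succAbove_mem j x' q
  have hz := abs_dotA_sub_dotA_le j (x ∘ p.succAbove) (x' ∘ q.succAbove)
  have hA : (avec j (n + 1) : ℤ) ≤ (n + 1) ^ j := by exact_mod_cast avec_le_pow hj (n + 1)
  have hB : (avec j n : ℤ) < (n + 1) ^ j := by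
    exact_mod_cast (avec_le_pow hj n).trans_lt (Nat.pow_lt_pow_left n.lt_succ_self (by omega))
  have hd : (hammingDist (x ∘ p.succAbove) (x' ∘ q.succAbove) : ℤ) ≤ 2 * s := by
    exact_mod_cast hdist
  have hsB : (hammingDist (x ∘ p.succAbove) (x' ∘ q.succAbove) : ℤ) * avec j n
      < 2 * s * (n + 1) ^ j :=
    calc _ ≤ 2 * (s : ℤ) * avec j n := mul_le_mul_of_nonneg_right hd (by positivity)
      _ < 2 * s * (n + 1) ^ j := mul_lt_mul_of_pos_left hB (by positivity)
  rw [abs_le] at hz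
  rw [abs_lt]
  constructor <;> linarith [hx.1, hx.2, hx'.1, hx'.2, hz.1, hz.2]

theorem eq_mul_neg_one_pow_card_flips {σ : ℕ → ℤ} (hσ : ∀ k, σ k = 1 ∨ σ k = -1) (k : ℕ) :
    σ k = σ 0 * (-1) ^ #{m ∈ range k | σ m ≠ σ (m + 1)} := by
  induction k with
  | zero => simp
  | succ k ih =>
    rw [range_add_one, filter_insert]
    split_ifs with h
    · rw [card_insert_of_notMem (by simp), pow_succ, ← mul_assoc, ← ih]
      have := hσ k
      have := hσ (k + 1)
      omega
    · rw [← ih, not_not.1 h]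

theorem sum_eval_mul_eq_zero {N m : ℕ} {c : ℕ → ℤ}
    (hmom : ∀ t ≤ m, ∑ k ∈ range N, ((k : ℤ) + 1) ^ t * c k = 0) {P : ℤ[X]}
    (hP : P.natDegree ≤ m) : ∑ k ∈ range N, P.eval ((k : ℤ) + 1) * c k = 0 := by
  simp only [eval_eq_sum_range' (Nat.lt_succ_of_le hP), sum_mul]
  rw [sum_comm]
  refine sum_eq_zero fun t ht => ?_
  simp only [mul_assoc, ← mul_sum, hmom t (Nat.lt_succ_iff.1 (mem_range.1 ht)), mul_zero]

theorem prod_mul_neg_one_pow_pos (F : Finset ℕ) (k : ℕ) :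
    0 < (∏ m ∈ F, (2 * (m : ℤ) + 1 - 2 * k)) * (-1) ^ #{m ∈ F | m < k} := by
  rw [card_filter, ← prod_pow_eq_pow_sum, ← prod_mul_distrib]
  refine prod_pos fun m _ => ?_
  split_ifs <;> simp only [pow_one, pow_zero, mul_one, mul_neg_one] <;> omega

theorem eq_zero_of_moments_of_card_flips_le {N m : ℕ} {c σ : ℕ → ℤ}
    (hσ : ∀ k, σ k = 1 ∨ σ k = -1) (hsign : ∀ k < N, 0 ≤ σ k * c k)
    (hflips : #{k ∈ range N | σ k ≠ σ (k + 1)} ≤ m)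
    (hmom : ∀ t ≤ m, ∑ k ∈ range N, ((k : ℤ) + 1) ^ t * c k = 0) :
    ∀ k < N, c k = 0 := by
  set F := {k ∈ range N | σ k ≠ σ (k + 1)}
  -- `P` has a root halfway through each sign change of `σ`, so every `P (k + 1) * c k` is `≥ 0`.
  set P : ℤ[X] := C (σ 0) * ∏ m ∈ F, (C (-2) * X + C (2 * (m : ℤ) + 3))
  have hdeg : P.natDegree ≤ m := by
    refine (natDegree_C_mul_le _ _).trans <| (natDegree_prod_le _ _).trans ?_
    exact (sum_le_card_nsmul _ _ 1 fun _ _ => natDegree_linear_le).trans (by simpa using hflips)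
  have hterm (k : ℕ) (hk : k < N) :
      P.eval ((k : ℤ) + 1) * c k
        = σ k * c k * ((∏ m ∈ F, (2 * (m : ℤ) + 1 - 2 * k)) * (-1) ^ #{m ∈ F | m < k}) := by
    have hF : {m ∈ range k | σ m ≠ σ (m + 1)} = {m ∈ F | m < k} := by
      ext m; simp only [F, mem_filter, mem_range]; constructor <;> rintro ⟨h1, h2⟩ <;> omega
    have hprod : P.eval ((k : ℤ) + 1) = σ 0 * ∏ m ∈ F, (2 * (m : ℤ) + 1 - 2 * k) := by
      simp only [P, eval_mul, eval_C, eval_prod, eval_add, eval_X]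
      congr 1
      exact prod_congr rfl fun m _ => by ring
    rw [hprod, eq_mul_neg_one_pow_card_flips hσ k, hF]
    have hsq : ((-1 : ℤ) ^ #{m ∈ F | m < k}) ^ 2 = 1 := by
      rw [← pow_mul, mul_comm, pow_mul]; simp
    linear_combination (-(σ 0) * c k * ∏ m ∈ F, (2 * (m : ℤ) + 1 - 2 * k)) * hsq
  have hnonneg (k) (hk : k ∈ range N) : 0 ≤ P.eval ((k : ℤ) + 1) * c k := by
    rw [hterm k (mem_range.1 hk)]
    exact mul_nonneg (hsign k (mem_range.1 hk)) (prod_mul_neg_one_pow_pos F k).le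
  intro k hk
  have hzero := (sum_eq_zero_iff_of_nonneg hnonneg).1 (sum_eval_mul_eq_zero hmom hdeg) k
    (mem_range.2 hk)
  rw [hterm k hk, mul_eq_zero, or_iff_left (prod_mul_neg_one_pow_pos F k).ne',
    mul_eq_zero] at hzero
  exact hzero.resolve_left (by rcases hσ k with h | h <;> simp [h])

theorem eq_zero_of_moments_of_card_jumps_le {N m : ℕ} {c v : ℕ → ℤ}
    (hcv : ∀ k < N, c k - v k ∈ Set.Icc 0 1) (hjumps : #{k ∈ range N | v k ≠ v (k + 1)} ≤ m)
    (hmom : ∀ t ≤ m, ∑ k ∈ range N, ((k : ℤ) + 1) ^ t * c k = 0) :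
    ∀ k < N, c k = 0 := by
  refine eq_zero_of_moments_of_card_flips_le (σ := fun k => if 0 ≤ v k then 1 else -1)
    (fun k => by split_ifs <;> simp) (fun k hk => ?_)
    ((card_le_card <| monotone_filter_right _ fun k _ hk h => hk (by rw [h])).trans hjumps) hmom
  have := hcv k hk
  simp only [Set.mem_Icc] at this
  split_ifs <;> linarith

theorem eq_of_dotA_eq_of_hammingDist_le {n m : ℕ} {x x' : Fin (n + 1) → Bool} {p q : Fin (n + 1)}
    (hpq : p ≤ q)
    (hdist : hammingDist (x ∘ p.succAbove) (x' ∘ q.succAbove) ≤ m)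
    (hdot : ∀ j ∈ Icc 1 (m + 1), dotA j x = dotA j x') : x = x' := by
  obtain ⟨w, hw, hwq⟩ : ∃ w : Fin (n + 1) → Bool,
      w ∘ q.succAbove = x ∘ p.succAbove ∧ w q = x' q :=
    ⟨q.insertNth (x' q) (x ∘ p.succAbove), Fin.insertNth_comp_succAbove ..,
      Fin.insertNth_apply_same ..⟩
  have hcv (k) (_ : k < n + 1) :
      tailSum (Bool.toInt ∘ x - Bool.toInt ∘ x') k
        - (tailSum (Bool.toInt ∘ w - Bool.toInt ∘ x') k - (x' q).toInt) ∈ Set.Icc 0 1 := by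
    rw [tailSum_sub, tailSum_sub, ← hwq]
    convert tailSum_sub_tailSum_add_mem (u := Bool.toInt ∘ x) (w := Bool.toInt ∘ w) hpq
      (by rw [Function.comp_assoc, Function.comp_assoc, hw])
      (fun i => Bool.toInt_mem_Icc (x i)) (Bool.toInt_mem_Icc (w q)) k using 1
    rw [Function.comp_apply]
    ring
  have hjumps : #{k ∈ range (n + 1) | tailSum (Bool.toInt ∘ w - Bool.toInt ∘ x') k - (x' q).toInt
      ≠ tailSum (Bool.toInt ∘ w - Bool.toInt ∘ x') (k + 1) - (x' q).toInt} ≤ m := by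
    calc _ ≤ #{k ∈ range (n + 1) | tailSum (Bool.toInt ∘ w - Bool.toInt ∘ x') k
            ≠ tailSum (Bool.toInt ∘ w - Bool.toInt ∘ x') (k + 1)} :=
          card_le_card <| monotone_filter_right _ fun k _ hk h => hk (by rw [h])
      _ ≤ #{i | (Bool.toInt ∘ w - Bool.toInt ∘ x') i ≠ 0} := card_tailSum_ne_le _ _
      _ = hammingDist w x' := by
          congr 1; ext i
          simp only [mem_filter, mem_univ, true_and, Pi.sub_apply, Function.comp_apply,
            sub_ne_zero]
          cases w i <;> cases x' i <;> simp
      _ ≤ m := by rwa [← hammingDist_comp_succAbove hwq, hw]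
  have hmom (t) (ht : t ≤ m) :
      ∑ k ∈ range (n + 1), ((k : ℤ) + 1) ^ t * tailSum (Bool.toInt ∘ x - Bool.toInt ∘ x') k
        = 0 := by
    rw [← Nat.add_sub_cancel t 1, ← sum_mul_avec_eq_sum_tailSum le_rfl]
    simp only [Pi.sub_apply, sub_mul, sum_sub_distrib, ← dotA_eq_sum]
    rw [hdot (t + 1) (mem_Icc.2 ⟨by omega, by omega⟩), sub_self]
  have hc := eq_zero_of_moments_of_card_jumps_le hcv hjumps hmom
  funext i
  have hi := tailSum_sub_tailSum_succ_val (Bool.toInt ∘ x - Bool.toInt ∘ x') i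
  have hnext : tailSum (Bool.toInt ∘ x - Bool.toInt ∘ x') (i + 1) = 0 := by
    rcases Nat.lt_or_ge (i + 1) (n + 1) with h | h
    exacts [hc _ h, tailSum_of_le _ h]
  rw [hc i i.isLt, hnext, sub_zero, Pi.sub_apply, Function.comp_apply, Function.comp_apply] at hi
  revert hi
  cases x i <;> cases x' i <;> simp

theorem stmt12 (s L : ℕ) (hs : 1 ≤ s) (hL : 2 * s + 1 < L)
    (x x' : Fin L → Bool)
    (hInt : (ball s x ∩ ball s x').Nonempty)
    (hf : ∀ j ∈ Finset.Icc 1 (2 * s + 1),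
      dotA j x % ((2 * s + 1) * L ^ j) = dotA j x' % ((2 * s + 1) * L ^ j)) :
    x = x' := by
  obtain ⟨n, rfl⟩ : ∃ n, L = n + 1 := ⟨L - 1, by omega⟩
  obtain ⟨y, ⟨f, hf_mono, hyx⟩, ⟨g, hg_mono, hyx'⟩⟩ := hInt
  obtain ⟨p, rfl⟩ := Fin.exists_succAbove_eq_of_strictMono hf_mono
  obtain ⟨q, rfl⟩ := Fin.exists_succAbove_eq_of_strictMono hg_mono
  have hdist : hammingDist (x ∘ p.succAbove) (x' ∘ q.succAbove) ≤ 2 * s :=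
    (hammingDist_triangle_left _ _ y).trans (by omega)
  have hdot (j) (hj : j ∈ Icc 1 (2 * s + 1)) : dotA j x = dotA j x' := by
    refine Nat.ModEq.eq_of_abs_lt (hf j hj) ?_
    rw [abs_sub_comm]
    exact_mod_cast abs_dotA_sub_dotA_lt hs (mem_Icc.1 hj).1 hdist
  rcases le_total p q with hpq | hqp
  · exact eq_of_dotA_eq_of_hammingDist_le hpq hdist hdot
  · refine (eq_of_dotA_eq_of_hammingDist_le hqp ?_ fun j hj => (hdot j hj).symm).symm
    rwa [hammingDist_comm]
end

section
/- For s = 1 and any positive integer n with n > 6 log₂ n + 3, there exists a single-deletion single-substitution correcting binary code of length n with redundancy at most 6 log₂ n + 3. -/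
/-!
A greedy (Gilbert–Varshamov) argument. A maximal set of pairwise non-confusable words is
dominating, so the `2 ^ n` words are covered by the confusability neighbourhoods of its
codewords. A word confusable with `c` is recovered from `c` by deleting a position, flipping
at most two bits and inserting a bit, so every neighbourhood has at most `2 n ^ 4` elements.
Hence `|C| ≥ 2 ^ n / (2 n ^ 4)`, i.e. the redundancy is at most `4 log₂ n + 1`.
-/

open Finset

theorem Finset.exists_pairwise_not_rel_and_card_le_mul {α : Type*} [Fintype α]
    (r : α → α → Prop) [DecidableRel r] [Std.Refl r] [Std.Symm r] {D : ℕ}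
    (hD : ∀ x, #{y | r x y} ≤ D) :
    ∃ C : Finset α, (C : Set α).Pairwise (fun a b => ¬ r a b) ∧
      Fintype.card α ≤ #C * D := by
  classical
  obtain ⟨C, hC⟩ :=
    (Set.toFinite {C : Finset α | (C : Set α).Pairwise fun a b => ¬ r a b}).exists_maximal
      ⟨∅, by simp⟩
  have hdom : ∀ x, ∃ c ∈ C, r c x := by
    intro x
    by_contra! hx
    have hins : (insert x C : Set α).Pairwise fun a b => ¬ r a b :=
      hC.1.insert fun c hc _ => ⟨fun h => hx c hc (symm h), hx c hc⟩
    exact hx x (hC.2 (by simpa using hins) (subset_insert x C) (mem_insert_self x C)) (refl x)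
  refine ⟨C, hC.1, ?_⟩
  calc Fintype.card α = #(univ : Finset α) := card_univ.symm
    _ ≤ #(C.biUnion fun c => {y | r c y}) := card_le_card fun x _ => by simpa using hdom x
    _ ≤ #C * D := card_biUnion_le_card_mul _ _ _ fun c _ => hD c

theorem StrictMono.exists_eq_succAbove {m : ℕ} {f : Fin m → Fin (m + 1)} (hf : StrictMono f) :
    ∃ p : Fin (m + 1), f = p.succAbove := by
  obtain ⟨p, hp⟩ : ∃ p, p ∉ Set.range f := by
    by_contra! h
    simpa using Fintype.card_le_of_surjective f fun p => h p
  refine ⟨p, ?_⟩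
  have hcard : ({p}ᶜ : Finset (Fin (m + 1))).card = m := by simp [card_compl]
  rw [orderEmbOfFin_unique hcard (fun x => by simpa using fun h => hp ⟨x, h⟩) hf,
    orderEmbOfFin_compl_singleton_eq_succAboveOrderEmb]
  rfl

theorem ball_nonempty (s : ℕ) {L : ℕ} (x : Fin L → Bool) : (ball s x).Nonempty :=
  ⟨x ∘ Fin.castLE (L.sub_le 1), Fin.castLE (L.sub_le 1), Fin.strictMono_castLE _, by simp⟩

def flipAt {m : ℕ} : Option (Fin m) → (Fin m → Bool) → Fin m → Bool
  | none, w => w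
  | some j, w => Function.update w j (!w j)

theorem exists_hammingDist_flipAt_le {m : ℕ} (u v : Fin m → Bool) :
    ∃ o, hammingDist u (flipAt o v) ≤ hammingDist u v - 1 := by
  by_cases huv : u = v
  · exact ⟨none, by simp [flipAt, huv]⟩
  obtain ⟨j, hj⟩ := Function.ne_iff.mp huv
  refine ⟨some j, ?_⟩
  have hsub : ({k | u k ≠ flipAt (some j) v k} : Finset (Fin m)) ⊆
      ({k | u k ≠ v k} : Finset _).erase j := by
    intro k hk
    simp only [mem_filter, mem_univ, true_and] at hk
    by_cases hkj : k = j
    · subst hkj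
      simp [flipAt, Bool.eq_not.mpr hj] at hk
    · simpa [flipAt, hkj] using hk
  exact (card_le_card hsub).trans_eq (card_erase_of_mem (by simpa using hj))

theorem exists_flipAt_flipAt_eq {m : ℕ} {u v : Fin m → Bool} (h : hammingDist u v ≤ 2) :
    ∃ o₁ o₂, u = flipAt o₂ (flipAt o₁ v) := by
  obtain ⟨o₁, h₁⟩ := exists_hammingDist_flipAt_le u v
  obtain ⟨o₂, h₂⟩ := exists_hammingDist_flipAt_le u (flipAt o₁ v)
  exact ⟨o₁, o₂, hammingDist_eq_zero.mp (by omega)⟩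

def Confusable (s : ℕ) {L : ℕ} (x y : Fin L → Bool) : Prop :=
  ¬ Disjoint (ball s x) (ball s y)

instance (s L : ℕ) : Std.Refl (Confusable s (L := L)) :=
  ⟨fun x => Set.not_disjoint_iff_nonempty_inter.mpr (by simpa using ball_nonempty s x)⟩

instance (s L : ℕ) : Std.Symm (Confusable s (L := L)) :=
  ⟨fun _ _ => mt disjoint_comm.mp⟩

def decode {m : ℕ} (c : Fin (m + 1) → Bool)
    (t : Fin (m + 1) × Fin (m + 1) × Bool × Option (Fin m) × Option (Fin m)) :
    Fin (m + 1) → Bool :=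
  let ⟨p, q, b, o₁, o₂⟩ := t
  q.insertNth b (flipAt o₂ (flipAt o₁ (c ∘ p.succAbove)))

theorem Confusable.mem_range_decode {m : ℕ} {c x : Fin (m + 1) → Bool} (h : Confusable 1 c x) :
    x ∈ Set.range (decode c) := by
  obtain ⟨y, ⟨g, hg, hcy⟩, f, hf, hxy⟩ := Set.not_disjoint_iff.mp h
  obtain ⟨q, rfl⟩ := hf.exists_eq_succAbove
  obtain ⟨p, rfl⟩ := hg.exists_eq_succAbove
  have hd : hammingDist (x ∘ q.succAbove) (c ∘ p.succAbove) ≤ 2 :=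
    calc _ ≤ hammingDist (x ∘ q.succAbove) y + hammingDist y (c ∘ p.succAbove) :=
          hammingDist_triangle _ _ _
      _ ≤ 1 + 1 := add_le_add (hammingDist_comm y _ ▸ hxy) hcy
  obtain ⟨o₁, o₂, ho⟩ := exists_flipAt_flipAt_eq hd
  refine ⟨(p, q, x q, o₁, o₂), ?_⟩
  simp only [decode, ← ho]
  exact Fin.insertNth_self_removeNth q x

theorem card_confusable_le {m : ℕ} (c : Fin (m + 1) → Bool) [DecidablePred (Confusable 1 c)] :
    #{x | Confusable 1 c x} ≤ 2 * (m + 1) ^ 4 := by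
  classical
  calc #{x | Confusable 1 c x} ≤ #(univ.image (decode c)) :=
        card_le_card fun x hx => by simpa using (mem_filter.mp hx).2.mem_range_decode
    _ ≤ #(univ : Finset _) := card_image_le
    _ = 2 * (m + 1) ^ 4 := by
        simp only [card_univ, Fintype.card_prod, Fintype.card_fin, Fintype.card_bool,
          Fintype.card_option]
        ring

theorem sub_logb_le_of_two_pow_le {n k : ℕ} (h : 2 ^ n ≤ k * (2 * n ^ 4)) :
    (n : ℝ) - Real.logb 2 k ≤ 4 * Real.logb 2 n + 1 := by
  have hn : n ≠ 0 := by rintro rfl; simp at h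
  have hk : k ≠ 0 := by rintro rfl; simp at h
  have hR : (2 : ℝ) ^ n ≤ k * (2 * n ^ 4) := by exact_mod_cast h
  have hlog := Real.logb_le_logb_of_le (b := 2) one_lt_two (by positivity) hR
  rw [Real.logb_mul (by positivity) (by positivity), Real.logb_mul (by positivity) (by positivity),
    Real.logb_pow, Real.logb_pow, Real.logb_self_eq_one one_lt_two] at hlog
  push_cast at hlog
  linarith

theorem stmt15_general (n : ℕ) :
    ∃ C : Set (Fin n → Bool),
      C.Nonempty ∧
      (∀ c ∈ C, ∀ c' ∈ C, c ≠ c' → Disjoint (ball 1 c) (ball 1 c')) ∧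
      (n : ℝ) - Real.logb 2 (Nat.card C) ≤ 6 * Real.logb 2 n + 3 := by
  classical
  rcases n with _ | m
  · exact ⟨Set.univ, Set.univ_nonempty, fun c _ c' _ hne => absurd (Subsingleton.elim c c') hne,
      by simp⟩
  obtain ⟨C, hC, hcard⟩ := exists_pairwise_not_rel_and_card_le_mul (Confusable 1)
    fun c : Fin (m + 1) → Bool => card_confusable_le c
  rw [Fintype.card_fun, Fintype.card_bool, Fintype.card_fin] at hcard
  have hlog := sub_logb_le_of_two_pow_le hcard
  have hlog_nonneg : 0 ≤ Real.logb 2 (m + 1 : ℕ) := Real.logb_nonneg one_lt_two (by simp)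
  refine ⟨C, ?_, fun c hc c' hc' hne => not_not.mp (hC hc hc' hne), ?_⟩
  · exact_mod_cast nonempty_of_ne_empty (by rintro rfl; simp at hcard)
  · rw [Nat.card_coe_set_eq, Set.ncard_coe_finset]
    linarith

theorem stmt15 (n : ℕ) (hn : 6 * Real.logb 2 n + 3 < (n : ℝ)) :
    ∃ C : Set (Fin n → Bool),
      C.Nonempty ∧
      (∀ c ∈ C, ∀ c' ∈ C, c ≠ c' → Disjoint (ball 1 c) (ball 1 c')) ∧
      (n : ℝ) - Real.logb 2 (Nat.card C) ≤ 6 * Real.logb 2 n + 3 :=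
  stmt15_general n
end

section
/- Let C_0 ⊆ {0,1}^{n_0} be a code with minimum Hamming distance at least 2s+1 and n_0 > 2s+1. For any c ∈ C_0, the set N_{C_0}(c) = {c' ∈ C_0 : B_{1,s}(c) ∩ B_{1,s}(c') ≠ ∅} has size at most 2·n_0²·Σ_{s'=0}^s C(n_0−1, s'), which is at most n_0^{s+2}. -/
theorem ball_spec {s L : ℕ} {x : Fin L → Bool} {y : Fin (L - 1) → Bool} (h : y ∈ ball s x) :
    ∃ f : Fin (L - 1) → Fin L, StrictMono f ∧ hammingDist y (x ∘ f) ≤ s := h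

/-- The witness string in the intersection of two balls. -/
noncomputable def wy {s L : ℕ} {x x' : Fin L → Bool}
    (h : (ball s x ∩ ball s x').Nonempty) : Fin (L - 1) → Bool := h.some

/-- The strictly monotone map witnessing `wy h ∈ ball s x`. -/
noncomputable def wF {s L : ℕ} {x x' : Fin L → Bool}
    (h : (ball s x ∩ ball s x').Nonempty) : Fin (L - 1) → Fin L :=
  (ball_spec h.some_mem.1).choose

/-- The strictly monotone map witnessing `wy h ∈ ball s x'`. -/
noncomputable def wF' {s L : ℕ} {x x' : Fin L → Bool}
    (h : (ball s x ∩ ball s x').Nonempty) : Fin (L - 1) → Fin L :=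
  (ball_spec h.some_mem.2).choose

theorem wF_spec {s L : ℕ} {x x' : Fin L → Bool} (h : (ball s x ∩ ball s x').Nonempty) :
    StrictMono (wF h) ∧ hammingDist (wy h) (x ∘ wF h) ≤ s :=
  (ball_spec h.some_mem.1).choose_spec

theorem wF'_spec {s L : ℕ} {x x' : Fin L → Bool} (h : (ball s x ∩ ball s x').Nonempty) :
    StrictMono (wF' h) ∧ hammingDist (wy h) (x' ∘ wF' h) ≤ s :=
  (ball_spec h.some_mem.2).choose_spec

/-- The (unique) element outside a co-singleton finset. -/
noncomputable def missing {L : ℕ} (hL : 0 < L) (S : Finset (Fin L)) : Fin L :=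
  if h : Sᶜ.Nonempty then Sᶜ.min' h else ⟨0, hL⟩

theorem eq_missing {L : ℕ} (hL : 0 < L) {S : Finset (Fin L)} (hS : S.card = L - 1)
    {j : Fin L} (hj : j ∉ S) : j = missing hL S := by
  have hcc : Sᶜ.card = 1 := by
    rw [Finset.card_compl, hS, Fintype.card_fin]; omega
  have hne : Sᶜ.Nonempty := Finset.card_pos.mp (by omega)
  rw [missing, dif_pos hne]
  obtain ⟨a, ha⟩ := Finset.card_eq_one.mp hcc
  have h1 : j ∈ Sᶜ := Finset.mem_compl.mpr hj
  have h2 : Sᶜ.min' hne ∈ Sᶜ := Finset.min'_mem _ _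
  have h1' : j = a := Finset.mem_singleton.mp (ha ▸ h1)
  have h2' : Sᶜ.min' hne = a := Finset.mem_singleton.mp (ha ▸ h2)
  rw [h1', h2']

/-- Reinsert a bit `b` at the missing position of `S` into `y`. -/
noncomputable def reinsert {L : ℕ} (S : Finset (Fin L)) (h : S.card = L - 1)
    (y : Fin (L - 1) → Bool) (b : Bool) : Fin L → Bool :=
  fun j => if hj : j ∈ S then y ((S.orderIsoOfFin h).symm ⟨j, hj⟩) else b

theorem hammingDist_reinsert_le {L s : ℕ} {S : Finset (Fin L)} (h : S.card = L - 1)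
    (y : Fin (L - 1) → Bool) (b : Bool) (c' : Fin L → Bool)
    (hout : ∀ j, j ∉ S → b = c' j)
    (hd : hammingDist y (c' ∘ S.orderEmbOfFin h) ≤ s) :
    hammingDist (reinsert S h y b) c' ≤ s := by
  have hsub : Finset.filter (fun j => reinsert S h y b j ≠ c' j) Finset.univ ⊆
      Finset.image (S.orderEmbOfFin h)
        (Finset.filter (fun i => y i ≠ c' (S.orderEmbOfFin h i)) Finset.univ) := by
    intro j hj
    rw [Finset.mem_filter] at hj
    by_cases hjS : j ∈ S
    · have hfi : S.orderEmbOfFin h ((S.orderIsoOfFin h).symm ⟨j, hjS⟩) = j :=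
        congrArg Subtype.val ((S.orderIsoOfFin h).apply_symm_apply ⟨j, hjS⟩)
      have hzj : reinsert S h y b j = y ((S.orderIsoOfFin h).symm ⟨j, hjS⟩) := by
        simp only [reinsert, dif_pos hjS]
      refine Finset.mem_image.mpr ⟨(S.orderIsoOfFin h).symm ⟨j, hjS⟩, ?_, hfi⟩
      rw [Finset.mem_filter]
      refine ⟨Finset.mem_univ _, ?_⟩
      rw [hfi, ← hzj]
      exact hj.2
    · exfalso
      apply hj.2
      have : reinsert S h y b j = b := by simp only [reinsert, dif_neg hjS]
      rw [this]
      exact hout j hjS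
  have h1 : hammingDist (reinsert S h y b) c' =
      (Finset.filter (fun j => reinsert S h y b j ≠ c' j) Finset.univ).card := rfl
  have h2 : hammingDist y (c' ∘ S.orderEmbOfFin h) =
      (Finset.filter (fun i => y i ≠ c' (S.orderEmbOfFin h i)) Finset.univ).card := rfl
  rw [h1]
  calc (Finset.filter (fun j => reinsert S h y b j ≠ c' j) Finset.univ).card
      ≤ (Finset.image (S.orderEmbOfFin h)
          (Finset.filter (fun i => y i ≠ c' (S.orderEmbOfFin h i)) Finset.univ)).card :=
        Finset.card_le_card hsub
    _ ≤ (Finset.filter (fun i => y i ≠ c' (S.orderEmbOfFin h i)) Finset.univ).card :=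
        Finset.card_image_le
    _ ≤ s := h2 ▸ hd

open scoped Classical in
/-- Encoding of a codeword whose ball intersects that of `x`. -/
noncomputable def encB {s L : ℕ} (hL : 0 < L) (x x' : Fin L → Bool) :
    Finset (Fin L) × Finset (Fin (L - 1)) × Finset (Fin L) × Bool :=
  if h : (ball s x ∩ ball s x').Nonempty then
    (Finset.image (wF h) Finset.univ,
     Finset.filter (fun i => wy h i ≠ x (wF h i)) Finset.univ,
     Finset.image (wF' h) Finset.univ,
     x' (missing hL (Finset.image (wF' h) Finset.univ)))
  else (∅, ∅, ∅, false)

open scoped Classical in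
theorem encB_pos {s L : ℕ} (hL : 0 < L) (x x' : Fin L → Bool)
    (h : (ball s x ∩ ball s x').Nonempty) :
    encB (s := s) hL x x' =
      (Finset.image (wF h) Finset.univ,
       Finset.filter (fun i => wy h i ≠ x (wF h i)) Finset.univ,
       Finset.image (wF' h) Finset.univ,
       x' (missing hL (Finset.image (wF' h) Finset.univ))) := dif_pos h

theorem card_image_strictMono {L : ℕ} {f : Fin (L - 1) → Fin L} (hf : StrictMono f) :
    (Finset.image f Finset.univ).card = L - 1 := by
  rw [Finset.card_image_of_injective _ hf.injective, Finset.card_univ, Fintype.card_fin]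

theorem key_inj {s L : ℕ} (hL : 0 < L)
    (C0 : Set (Fin L → Bool))
    (hmin : ∀ c ∈ C0, ∀ c' ∈ C0, c ≠ c' → 2 * s + 1 ≤ hammingDist c c')
    (c : Fin L → Bool)
    {c₁ c₂ : Fin L → Bool} (h₁ : c₁ ∈ C0) (h₂ : c₂ ∈ C0)
    (hb₁ : (ball s c ∩ ball s c₁).Nonempty) (hb₂ : (ball s c ∩ ball s c₂).Nonempty)
    (he : encB (s := s) hL c c₁ = encB (s := s) hL c c₂) : c₁ = c₂ := by
  rw [encB_pos hL c c₁ hb₁, encB_pos hL c c₂ hb₂] at he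
  rw [Prod.ext_iff, Prod.ext_iff, Prod.ext_iff] at he
  obtain ⟨hS, hE, hS', hb⟩ := he
  simp only at hS hE hS' hb
  -- the two deletion maps agree
  have hF₁m := (wF_spec hb₁).1
  have hF₂m := (wF_spec hb₂).1
  have hcard : (Finset.image (wF hb₁) Finset.univ).card = L - 1 := card_image_strictMono hF₁m
  have e1 : wF hb₁ = (Finset.image (wF hb₁) Finset.univ).orderEmbOfFin hcard :=
    Finset.orderEmbOfFin_unique hcard
      (fun i => Finset.mem_image_of_mem _ (Finset.mem_univ i)) hF₁m
  have e2 : wF hb₂ = (Finset.image (wF hb₁) Finset.univ).orderEmbOfFin hcard :=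
    Finset.orderEmbOfFin_unique hcard
      (fun i => by rw [hS]; exact Finset.mem_image_of_mem _ (Finset.mem_univ i)) hF₂m
  have hFF : wF hb₁ = wF hb₂ := e1.trans e2.symm
  -- the two witness strings agree
  have hy : wy hb₁ = wy hb₂ := by
    funext i
    have hEi := Finset.ext_iff.mp hE i
    simp only [Finset.mem_filter, Finset.mem_univ, true_and] at hEi
    rw [hFF] at hEi
    have hgen : ∀ u v w : Bool, ((u ≠ w) ↔ (v ≠ w)) → u = v := by decide
    exact hgen _ _ _ hEi
  -- the two insertion maps agree
  have hF'₁m := (wF'_spec hb₁).1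
  have hF'₂m := (wF'_spec hb₂).1
  have hcard' : (Finset.image (wF' hb₁) Finset.univ).card = L - 1 := card_image_strictMono hF'₁m
  have e1' : wF' hb₁ = (Finset.image (wF' hb₁) Finset.univ).orderEmbOfFin hcard' :=
    Finset.orderEmbOfFin_unique hcard'
      (fun i => Finset.mem_image_of_mem _ (Finset.mem_univ i)) hF'₁m
  have e2' : wF' hb₂ = (Finset.image (wF' hb₁) Finset.univ).orderEmbOfFin hcard' :=
    Finset.orderEmbOfFin_unique hcard'
      (fun i => by rw [hS']; exact Finset.mem_image_of_mem _ (Finset.mem_univ i)) hF'₂m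
  -- the reinserted string is close to both codewords
  set S' := Finset.image (wF' hb₁) Finset.univ with hS'def
  set z := reinsert S' hcard' (wy hb₁) (c₁ (missing hL S')) with hz
  have hz1 : hammingDist z c₁ ≤ s := by
    apply hammingDist_reinsert_le
    · intro j hj
      rw [eq_missing hL hcard' hj]
    · rw [← e1']
      exact (wF'_spec hb₁).2
  have hz2 : hammingDist z c₂ ≤ s := by
    have himg : Finset.image (wF' hb₁) Finset.univ = Finset.image (wF' hb₂) Finset.univ :=
      hS'def.symm.trans hS'
    have hbb : c₁ (missing hL S') = c₂ (missing hL S') := by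
      rw [hS'def, himg] at hb ⊢; exact hb
    apply hammingDist_reinsert_le
    · intro j hj
      rw [eq_missing hL hcard' hj, hbb]
    · rw [← e2', hy]
      exact (wF'_spec hb₂).2
  by_contra hne
  have hmm := hmin c₁ h₁ c₂ h₂ hne
  have htri := hammingDist_triangle c₁ z c₂
  have hcm : hammingDist c₁ z = hammingDist z c₁ := hammingDist_comm _ _
  omega

theorem sum_bound (m : ℕ) (hm : 2 ≤ m) :
    ∀ N : ℕ, 2 * m + 2 ≤ N →
      2 * ∑ k ∈ Finset.range (m + 1), Nat.choose (N - 1) k ≤ N ^ m := by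
  induction m, hm using Nat.le_induction with
  | base =>
    intro N hN
    rw [Finset.sum_range_succ, Finset.sum_range_succ, Finset.sum_range_one,
      Nat.choose_zero_right, Nat.choose_one_right]
    have h2 : 2 * Nat.choose (N - 1) 2 ≤ (N - 1) * (N - 1 - 1) := by
      rw [Nat.choose_two_right, Nat.mul_comm]
      exact Nat.div_mul_le_self _ 2
    obtain ⟨K, rfl⟩ := Nat.exists_eq_add_of_le hN
    have e1 : 2 * 2 + 2 + K - 1 = K + 5 := by omega
    have e3 : 2 * 2 + 2 + K = K + 6 := by omega
    rw [e1] at h2 ⊢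
    rw [show K + 5 - 1 = K + 4 from by omega] at h2
    rw [e3]
    nlinarith [h2]
  | succ m hm IH =>
    intro N hN
    have h1 := IH N (by omega)
    rw [Finset.sum_range_succ, Nat.mul_add]
    have h6 : 6 ≤ Nat.factorial (m + 1) := by
      calc 6 = Nat.factorial 3 := rfl
        _ ≤ Nat.factorial (m + 1) := Nat.factorial_le (by omega)
    have hdesc : Nat.factorial (m + 1) * Nat.choose (N - 1) (m + 1) = (N - 1).descFactorial (m + 1) :=
      (Nat.descFactorial_eq_factorial_mul_choose _ _).symm
    have h2 : 6 * Nat.choose (N - 1) (m + 1) ≤ (N - 1) ^ (m + 1) := by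
      calc 6 * Nat.choose (N - 1) (m + 1) ≤ Nat.factorial (m + 1) * Nat.choose (N - 1) (m + 1) :=
            Nat.mul_le_mul_right _ h6
        _ = (N - 1).descFactorial (m + 1) := hdesc
        _ ≤ (N - 1) ^ (m + 1) := Nat.descFactorial_le_pow _ _
    have h3 : (N - 1) ^ (m + 1) ≤ (N - 1) * N ^ m := by
      rw [pow_succ]
      calc (N - 1) ^ m * (N - 1) ≤ N ^ m * (N - 1) :=
            Nat.mul_le_mul_right _ (Nat.pow_le_pow_left (Nat.sub_le _ _) _)
        _ = (N - 1) * N ^ m := Nat.mul_comm _ _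
    have h4 : 2 * Nat.choose (N - 1) (m + 1) ≤ (N - 1) * N ^ m := by
      have : 2 * Nat.choose (N - 1) (m + 1) ≤ 6 * Nat.choose (N - 1) (m + 1) :=
        Nat.mul_le_mul_right _ (by omega)
      omega
    calc 2 * ∑ k ∈ Finset.range (m + 1), Nat.choose (N - 1) k
          + 2 * Nat.choose (N - 1) (m + 1)
        ≤ N ^ m + (N - 1) * N ^ m := Nat.add_le_add h1 h4
      _ = (1 + (N - 1)) * N ^ m := by ring
      _ = N * N ^ m := by
          have : 1 + (N - 1) = N := by omega
          rw [this]
      _ = N ^ (m + 1) := by rw [pow_succ, Nat.mul_comm]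

theorem stmt16 (s n : ℕ) (hs : 2 ≤ s) (hn : 2 * s + 1 < n)
    (C0 : Set (Fin n → Bool))
    (hmin : ∀ c ∈ C0, ∀ c' ∈ C0, c ≠ c' → 2 * s + 1 ≤ hammingDist c c')
    (c : Fin n → Bool) (hc : c ∈ C0) :
    Nat.card {c' : Fin n → Bool //
        c' ∈ C0 ∧ (ball s c ∩ ball s c').Nonempty} ≤
      2 * n ^ 2 * ∑ s' ∈ Finset.range (s + 1), Nat.choose (n - 1) s' ∧
    2 * n ^ 2 * ∑ s' ∈ Finset.range (s + 1), Nat.choose (n - 1) s' ≤ n ^ (s + 2) := by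
  classical
  have hL : 0 < n := by omega
  constructor
  · -- counting part
    set P : (Fin n → Bool) → Prop :=
      fun c' => c' ∈ C0 ∧ (ball s c ∩ ball s c').Nonempty with hP
    set t : Finset (Finset (Fin n) × Finset (Fin (n - 1)) × Finset (Fin n) × Bool) :=
      Finset.powersetCard (n - 1) (Finset.univ : Finset (Fin n)) ×ˢ
        ((Finset.range (s + 1)).biUnion fun k =>
          Finset.powersetCard k (Finset.univ : Finset (Fin (n - 1)))) ×ˢ
        Finset.powersetCard (n - 1) (Finset.univ : Finset (Fin n)) ×ˢ
        (Finset.univ : Finset Bool) with ht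
    have hcard1 : Nat.card {c' : Fin n → Bool // P c'} =
        (Finset.filter P Finset.univ).card := by
      rw [Nat.card_eq_fintype_card, Fintype.card_subtype]
    rw [hcard1]
    have hmaps : ∀ a ∈ Finset.filter P Finset.univ, encB (s := s) hL c a ∈ t := by
      intro a ha
      rw [Finset.mem_filter] at ha
      obtain ⟨-, -, hne⟩ := ha
      rw [encB_pos hL c a hne, ht]
      rw [Finset.mem_product, Finset.mem_product, Finset.mem_product]
      refine ⟨?_, ?_, ?_, Finset.mem_univ _⟩
      · exact Finset.mem_powersetCard_univ.mpr (card_image_strictMono (wF_spec hne).1)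
      · rw [Finset.mem_biUnion]
        refine ⟨(Finset.filter (fun i => wy hne i ≠ c (wF hne i)) Finset.univ).card, ?_, ?_⟩
        · rw [Finset.mem_range]
          have heq : hammingDist (wy hne) (c ∘ wF hne) =
              (Finset.filter (fun i => wy hne i ≠ c (wF hne i)) Finset.univ).card := rfl
          have := (wF_spec hne).2
          omega
        · exact Finset.mem_powersetCard_univ.mpr rfl
      · exact Finset.mem_powersetCard_univ.mpr (card_image_strictMono (wF'_spec hne).1)
    have hinj : Set.InjOn (fun a => encB (s := s) hL c a) ↑(Finset.filter P Finset.univ) := by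
      intro a ha b hb hab
      rw [Finset.coe_filter] at ha hb
      exact key_inj hL C0 hmin c ha.2.1 hb.2.1 ha.2.2 hb.2.2 hab
    have hle := Finset.card_le_card_of_injOn _ hmaps hinj
    refine le_trans hle (le_of_eq ?_)
    rw [ht, Finset.card_product, Finset.card_product, Finset.card_product]
    have hbc : ((Finset.range (s + 1)).biUnion fun k =>
        Finset.powersetCard k (Finset.univ : Finset (Fin (n - 1)))).card =
        ∑ s' ∈ Finset.range (s + 1), Nat.choose (n - 1) s' := by
      rw [Finset.card_biUnion]
      · refine Finset.sum_congr rfl fun k _ => ?_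
        rw [Finset.card_powersetCard, Finset.card_univ, Fintype.card_fin]
      · intro x _ y _ hxy
        exact Finset.pairwise_disjoint_powersetCard _ hxy
    have hpc : (Finset.powersetCard (n - 1) (Finset.univ : Finset (Fin n))).card = n := by
      rw [Finset.card_powersetCard, Finset.card_univ, Fintype.card_fin]
      have h1 : n - (n - 1) = 1 := by omega
      rw [← Nat.choose_symm (Nat.sub_le n 1), h1, Nat.choose_one_right]
    rw [hbc, hpc, Finset.card_univ, Fintype.card_bool]
    ring
  · -- the numeric bound
    have hkey := sum_bound s hs n (by omega)
    calc 2 * n ^ 2 * ∑ s' ∈ Finset.range (s + 1), Nat.choose (n - 1) s'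
        = n ^ 2 * (2 * ∑ s' ∈ Finset.range (s + 1), Nat.choose (n - 1) s') := by ring
      _ ≤ n ^ 2 * n ^ s := Nat.mul_le_mul_left _ hkey
      _ = n ^ (s + 2) := by rw [← pow_add]; ring_nf
end
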